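/- Let T be a simplicial tree in which every vertex has finite valence ≥ 3, with a cyclic order or_x on the set of germs of rays at each vertex x. Define o : (∂∞T)³ → {−1,0,1} by o(a,b,c) = or_t(r_a,r_b,r_c) for pairwise distinct a,b,c, where t is the center of the tripod determined by a,b,c and r_a,r_b,r_c the germs at t of [t,a), [t,b), [t,c), and o(a,b,c) = 0 otherwise. Then o is a total cyclic order on ∂∞T. -/

import Mathlib

/-- `r` represents a germ of geodesic ray issued from `x`. -/
def IsRayFrom {X : Type*} [MetricSpace X] (x : X) (r : ℝ → X) : Prop :=
  r 0 = x ∧ ∃ ε > (0 : ℝ), ∀ s ∈ Set.Icc 0 ε, ∀ t ∈ Set.Icc 0 ε,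
    dist (r s) (r t) = |s - t|

/-- Two ray representatives issued from `x` define the same germ if they coincide on
some initial interval. -/
def GermEq {X : Type*} [MetricSpace X] (x : X) (r r' : ℝ → X) : Prop :=
  ∃ ε > (0 : ℝ), ∀ s ∈ Set.Icc 0 ε, r s = r' s

/-- `r : ℝ → X` is a complete geodesic ray (isometric on `[0, +∞)`). -/
def IsGeodesicRay {X : Type*} [MetricSpace X] (r : ℝ → X) : Prop :=
  ∀ s ≥ (0 : ℝ), ∀ t ≥ (0 : ℝ), dist (r s) (r t) = |s - t|

/-- Two geodesic rays are asymptotic (they define the same point at infinity). -/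
def Asymptotic {X : Type*} [MetricSpace X] (r r' : ℝ → X) : Prop :=
  ∃ C : ℝ, ∀ t ≥ (0 : ℝ), dist (r t) (r' t) ≤ C

/-- A simplicial tree (as a metric space): a geodesic `ℝ`-tree with a discrete set of
vertices, every vertex of finite valence `≥ 3`, every non-vertex point of valence `2`,
and in which every germ of ray extends to a geodesic ray. -/
structure SimplicialTreeSpace where
  space : Type
  [ms : MetricSpace space]
  /-- `space` is geodesic. -/
  geodesic : ∀ x y : space, ∃ γ : ℝ → space, γ 0 = x ∧ γ (dist x y) = y ∧
    ∀ s ∈ Set.Icc 0 (dist x y), ∀ t ∈ Set.Icc 0 (dist x y), dist (γ s) (γ t) = |s - t|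
  /-- `space` is `0`-hyperbolic (four-point condition), hence an `ℝ`-tree. -/
  zero_hyperbolic : ∀ x y z w : space,
    dist x z + dist y w ≤ max (dist x y + dist z w) (dist x w + dist y z)
  vertices : Set space
  /-- Edge lengths are bounded below: vertices are uniformly separated. -/
  edge_lengths_bounded_below : ∃ lambda > (0 : ℝ), ∀ x ∈ vertices, ∀ y ∈ vertices,
    x ≠ y → lambda ≤ dist x y
  /-- Non-vertex points have exactly two germs of rays. -/
  two_germs_off_vertices : ∀ x ∉ vertices, ∃ r r' : ℝ → space,
    IsRayFrom x r ∧ IsRayFrom x r' ∧ ¬ GermEq x r r' ∧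
    ∀ r'' : ℝ → space, IsRayFrom x r'' → GermEq x r'' r ∨ GermEq x r'' r'
  /-- Every vertex has finite valence. -/
  germs_finite : ∀ x : space, ∃ Fx : Set (ℝ → space), Fx.Finite ∧
    ∀ r : ℝ → space, IsRayFrom x r → ∃ r' ∈ Fx, GermEq x r r'
  /-- Every vertex has valence at least `3`. -/
  valence_ge_three : ∀ x ∈ vertices, ∃ r₁ r₂ r₃ : ℝ → space,
    IsRayFrom x r₁ ∧ IsRayFrom x r₂ ∧ IsRayFrom x r₃ ∧
    ¬ GermEq x r₁ r₂ ∧ ¬ GermEq x r₂ r₃ ∧ ¬ GermEq x r₁ r₃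
  /-- Every germ of ray extends to a complete geodesic ray. -/
  germ_extends : ∀ (x : space) (r : ℝ → space), IsRayFrom x r →
    ∃ ρ : ℝ → space, IsGeodesicRay ρ ∧ ρ 0 = x ∧ GermEq x ρ r

attribute [instance] SimplicialTreeSpace.ms

/-- The boundary at infinity of the tree: geodesic rays modulo the asymptotic
relation. -/
def SimplicialTreeSpace.Boundary (T : SimplicialTreeSpace) : Type :=
  Quot (fun r r' : {r : ℝ → T.space // IsGeodesicRay r} => Asymptotic r.1 r'.1)

/-- The point at infinity of a geodesic ray. -/
def SimplicialTreeSpace.atInfinity (T : SimplicialTreeSpace)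
    (r : {r : ℝ → T.space // IsGeodesicRay r}) : T.Boundary :=
  Quot.mk _ r

/-- A cyclic orientation of the tree: a total cyclic order, invariant under germ
equivalence, on the germs of rays at each point. -/
structure IsCyclicOrientation (T : SimplicialTreeSpace)
    (ord : T.space → (ℝ → T.space) → (ℝ → T.space) → (ℝ → T.space) → ℤ) : Prop where
  range : ∀ x r₁ r₂ r₃, ord x r₁ r₂ r₃ = -1 ∨ ord x r₁ r₂ r₃ = 0 ∨ ord x r₁ r₂ r₃ = 1
  germ_invariant : ∀ x r₁ r₂ r₃ r₁' r₂' r₃', GermEq x r₁ r₁' → GermEq x r₂ r₂' →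
    GermEq x r₃ r₃' → ord x r₁ r₂ r₃ = ord x r₁' r₂' r₃'
  zero_iff : ∀ x r₁ r₂ r₃, IsRayFrom x r₁ → IsRayFrom x r₂ → IsRayFrom x r₃ →
    (ord x r₁ r₂ r₃ = 0 ↔ GermEq x r₁ r₂ ∨ GermEq x r₂ r₃ ∨ GermEq x r₁ r₃)
  cyclic : ∀ x r₁ r₂ r₃, ord x r₁ r₂ r₃ = ord x r₂ r₃ r₁ ∧
    ord x r₁ r₂ r₃ = - ord x r₁ r₃ r₂
  trans : ∀ x r₁ r₂ r₃ r₄, IsRayFrom x r₁ → IsRayFrom x r₂ → IsRayFrom x r₃ →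
    IsRayFrom x r₄ → ¬ GermEq x r₁ r₂ → ¬ GermEq x r₁ r₃ → ¬ GermEq x r₁ r₄ →
    ¬ GermEq x r₂ r₃ → ¬ GermEq x r₂ r₄ → ¬ GermEq x r₃ r₄ →
    ord x r₁ r₂ r₃ = 1 → ord x r₁ r₃ r₄ = 1 → ord x r₁ r₂ r₄ = 1

/-- `o` is the cyclic order on the boundary at infinity induced by the cyclic
orientation `ord` of the tree: `o(a,b,c) = 0` if `a, b, c` are not pairwise distinct,
and otherwise `o(a,b,c) = ord_t(r_a, r_b, r_c)` where `t` is the center of the tripod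
determined by `a, b, c` — characterized as the unique point from which rays `r_a, r_b,
r_c` towards `a, b, c` have pairwise distinct germs. -/
structure IsInducedBoundaryOrder (T : SimplicialTreeSpace)
    (ord : T.space → (ℝ → T.space) → (ℝ → T.space) → (ℝ → T.space) → ℤ)
    (o : T.Boundary → T.Boundary → T.Boundary → ℤ) : Prop where
  eq_ord : ∀ (t : T.space) (ra rb rc : {r : ℝ → T.space // IsGeodesicRay r}),
    ra.1 0 = t → rb.1 0 = t → rc.1 0 = t →
    ¬ GermEq t ra.1 rb.1 → ¬ GermEq t rb.1 rc.1 → ¬ GermEq t ra.1 rc.1 →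
    o (T.atInfinity ra) (T.atInfinity rb) (T.atInfinity rc) = ord t ra.1 rb.1 rc.1
  zero_of_not_distinct : ∀ a b c : T.Boundary, (a = b ∨ b = c ∨ a = c) → o a b c = 0

/-- A total cyclic order (with values in `{-1,0,1} ⊆ ℤ`). -/
def IsTotalCyclicOrder {X : Type*} (o : X → X → X → ℤ) : Prop :=
  (∀ x y z : X, o x y z = -1 ∨ o x y z = 0 ∨ o x y z = 1) ∧
  (∀ x y z : X, o x y z = 0 ↔ ¬(x ≠ y ∧ y ≠ z ∧ x ≠ z)) ∧
  (∀ x y z : X, o x y z = o y z x ∧ o x y z = - o x z y) ∧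
  (∀ x y z t : X, x ≠ y → x ≠ z → x ≠ t → y ≠ z → y ≠ t → z ≠ t →
    o x y z = 1 → o x z t = 1 → o x y t = 1)

/-! Two directions at infinity leave a point `w` of the tree through the same germ exactly
when far points of the corresponding rays have positive Gromov product at `w`; it vanishes
for distinct germs. The Gromov product is stable under bounded perturbations of far points,
so this test does not depend on the choice of rays. It locates the center of a tripod at the
last branch point of three rays from a common origin, and it shows that four points at
infinity cannot be split as `{x, w} | {y, z}` at one point and as `{x, y} | {z, w}` at
another, because `(x|y)_s + (z|w)_s - (x|w)_s - (y|z)_s` does not depend on `s`. Given this,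
transitivity of `o` reduces to transitivity of the cyclic order at a single vertex. -/

open Filter Set

section MetricTree

variable {X : Type*} [MetricSpace X]

noncomputable def gromovProduct (w x y : X) : ℝ := (dist w x + dist w y - dist x y) / 2

def ZeroHyperbolic (X : Type*) [MetricSpace X] : Prop :=
  ∀ x y z w : X, dist x z + dist y w ≤ max (dist x y + dist z w) (dist x w + dist y z)

def IsGeodesicSegment (γ : ℝ → X) (x y : X) : Prop :=
  γ 0 = x ∧ γ (dist x y) = y ∧
    ∀ s ∈ Icc 0 (dist x y), ∀ t ∈ Icc 0 (dist x y), dist (γ s) (γ t) = |s - t|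

def IsGeodesicSpace (X : Type*) [MetricSpace X] : Prop :=
  ∀ x y : X, ∃ γ : ℝ → X, IsGeodesicSegment γ x y

def IsBranchTime (r r' : ℝ → X) (m : ℝ) : Prop :=
  0 ≤ m ∧ (∀ s ∈ Icc 0 m, r s = r' s) ∧
    ∀ u ≥ m, ∀ v ≥ m, dist (r u) (r' v) = (u - m) + (v - m)

theorem GermEq.refl (x : X) (r : ℝ → X) : GermEq x r r :=
  ⟨1, one_pos, fun _ _ => rfl⟩

theorem GermEq.symm {x : X} {r r' : ℝ → X} (h : GermEq x r r') : GermEq x r' r :=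
  let ⟨ε, hε, h⟩ := h
  ⟨ε, hε, fun s hs => (h s hs).symm⟩

theorem GermEq.trans {x : X} {r r' r'' : ℝ → X} (h : GermEq x r r') (h' : GermEq x r' r'') :
    GermEq x r r'' := by
  obtain ⟨ε, hε, h⟩ := h
  obtain ⟨ε', hε', h'⟩ := h'
  refine ⟨min ε ε', lt_min hε hε', fun s hs => ?_⟩
  rw [h s ⟨hs.1, hs.2.trans (min_le_left _ _)⟩, h' s ⟨hs.1, hs.2.trans (min_le_right _ _)⟩]

theorem Asymptotic.refl (r : ℝ → X) : Asymptotic r r :=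
  ⟨0, fun t _ => by simp⟩

theorem Asymptotic.symm {r r' : ℝ → X} (h : Asymptotic r r') : Asymptotic r' r :=
  let ⟨C, hC⟩ := h
  ⟨C, fun t ht => dist_comm (r' t) (r t) ▸ hC t ht⟩

theorem Asymptotic.trans {r r' r'' : ℝ → X} (h : Asymptotic r r') (h' : Asymptotic r' r'') :
    Asymptotic r r'' := by
  obtain ⟨C, hC⟩ := h
  obtain ⟨C', hC'⟩ := h'
  exact ⟨C + C', fun t ht => (dist_triangle _ _ _).trans (add_le_add (hC t ht) (hC' t ht))⟩

theorem gromovProduct_comm (w x y : X) : gromovProduct w x y = gromovProduct w y x := by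
  unfold gromovProduct
  rw [dist_comm x y, add_comm (dist w x)]

theorem gromovProduct_self (w x : X) : gromovProduct w x x = dist w x := by
  unfold gromovProduct
  rw [dist_self]
  ring

theorem gromovProduct_nonneg (w x y : X) : 0 ≤ gromovProduct w x y := by
  unfold gromovProduct
  linarith [dist_triangle_left x y w]

theorem gromovProduct_le_dist_left (w x y : X) : gromovProduct w x y ≤ dist w x := by
  unfold gromovProduct
  linarith [dist_triangle w x y]

theorem dist_sub_dist_le_gromovProduct (w x y : X) :
    dist w x - dist x y ≤ gromovProduct w x y := by
  unfold gromovProduct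
  linarith [dist_triangle w x y, dist_triangle w y x, dist_comm x y]

theorem gromovProduct_add_sub_add_eq (w w' x y z u : X) :
    gromovProduct w x y + gromovProduct w z u - (gromovProduct w x u + gromovProduct w y z) =
      gromovProduct w' x y + gromovProduct w' z u -
        (gromovProduct w' x u + gromovProduct w' y z) := by
  unfold gromovProduct
  ring

theorem ZeroHyperbolic.le_gromovProduct_trans (hX : ZeroHyperbolic X) {w x y z : X} {δ : ℝ}
    (hxy : δ ≤ gromovProduct w x y) (hyz : δ ≤ gromovProduct w y z) :
    δ ≤ gromovProduct w x z := by
  have h := hX x y z w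
  unfold gromovProduct at *
  rcases max_cases (dist x y + dist z w) (dist x w + dist y z) with ⟨hmax, -⟩ | ⟨hmax, -⟩ <;>
    rw [hmax] at h <;> linarith [dist_comm w x, dist_comm w y, dist_comm w z]

theorem ZeroHyperbolic.eq_of_dist_le_gromovProduct (hX : ZeroHyperbolic X) {w u v P P' : X}
    (hP : dist w P + dist P u = dist w u) (hP' : dist w P' + dist P' v = dist w v)
    (hPP' : dist w P = dist w P') (h : dist w P ≤ gromovProduct w u v) : P = P' := by
  have hPu : dist w P ≤ gromovProduct w P u := by unfold gromovProduct; linarith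
  have hvP' : dist w P ≤ gromovProduct w v P' := by
    unfold gromovProduct; linarith [dist_comm v P']
  have hPP := hX.le_gromovProduct_trans (hX.le_gromovProduct_trans hPu h) hvP'
  unfold gromovProduct at hPP
  exact dist_le_zero.1 (by linarith)

theorem IsGeodesicRay.dist_eq {r : ℝ → X} (hr : IsGeodesicRay r) {s t : ℝ} (hs : 0 ≤ s)
    (hst : s ≤ t) : dist (r s) (r t) = t - s := by
  rw [hr s hs t (hs.trans hst), abs_sub_comm, abs_of_nonneg (sub_nonneg.2 hst)]

theorem IsGeodesicRay.dist_zero_eq {r : ℝ → X} (hr : IsGeodesicRay r) {s : ℝ} (hs : 0 ≤ s) :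
    dist (r 0) (r s) = s := by
  rw [hr.dist_eq le_rfl hs, sub_zero]

theorem IsGeodesicRay.dist_add_dist {r : ℝ → X} (hr : IsGeodesicRay r) {s t : ℝ} (hs : 0 ≤ s)
    (hst : s ≤ t) : dist (r 0) (r s) + dist (r s) (r t) = dist (r 0) (r t) := by
  rw [hr.dist_zero_eq hs, hr.dist_eq hs hst, hr.dist_zero_eq (hs.trans hst)]
  ring

theorem IsGeodesicRay.shift {r : ℝ → X} (hr : IsGeodesicRay r) {a : ℝ} (ha : 0 ≤ a) :
    IsGeodesicRay fun s => r (a + s) := by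
  intro s hs t ht
  rw [hr _ (by linarith) _ (by linarith), add_sub_add_left_eq_sub]

theorem IsGeodesicRay.isRayFrom {r : ℝ → X} (hr : IsGeodesicRay r) : IsRayFrom (r 0) r :=
  ⟨rfl, 1, one_pos, fun s hs t ht => hr s hs.1 t ht.1⟩

theorem IsGeodesicRay.sub_le_gromovProduct {r : ℝ → X} (hr : IsGeodesicRay r) {N C : ℝ}
    {x : X} (hN : 0 ≤ N) (hx : dist (r N) x ≤ C) : N - C ≤ gromovProduct (r 0) (r N) x := by
  linarith [dist_sub_dist_le_gromovProduct (r 0) (r N) x, hr.dist_zero_eq hN]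

theorem IsGeodesicSegment.dist_left {γ : ℝ → X} {x y : X} (hγ : IsGeodesicSegment γ x y)
    {s : ℝ} (hs : s ∈ Icc 0 (dist x y)) : dist x (γ s) = s := by
  rw [← hγ.1, hγ.2.2 0 ⟨le_rfl, dist_nonneg⟩ s hs, zero_sub, abs_neg, abs_of_nonneg hs.1]

theorem IsGeodesicSegment.dist_right {γ : ℝ → X} {x y : X} (hγ : IsGeodesicSegment γ x y)
    {s : ℝ} (hs : s ∈ Icc 0 (dist x y)) : dist (γ s) y = dist x y - s := by
  conv_lhs => rw [← hγ.2.1]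
  rw [hγ.2.2 s hs _ ⟨dist_nonneg, le_rfl⟩, abs_sub_comm, abs_of_nonneg (sub_nonneg.2 hs.2)]

theorem ZeroHyperbolic.eqOn_of_eq (hX : ZeroHyperbolic X) {r r' : ℝ → X}
    (hr : IsGeodesicRay r) (hr' : IsGeodesicRay r') (h0 : r' 0 = r 0) {u : ℝ} (hu : 0 ≤ u)
    (h : r u = r' u) : ∀ s ∈ Icc 0 u, r s = r' s := by
  intro s hs
  refine hX.eq_of_dist_le_gromovProduct (hr.dist_add_dist hs.1 hs.2) (v := r u) ?_ ?_ ?_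
  · rw [h, ← h0]
    exact hr'.dist_add_dist hs.1 hs.2
  · rw [hr.dist_zero_eq hs.1, ← h0, hr'.dist_zero_eq hs.1]
  · rw [gromovProduct_self, hr.dist_zero_eq hs.1, hr.dist_zero_eq hu]
    exact hs.2

theorem ZeroHyperbolic.gromovProduct_eq_zero_of_not_germEq (hX : ZeroHyperbolic X)
    {f g : ℝ → X} (hf : IsGeodesicRay f) (hg : IsGeodesicRay g) (hg0 : g 0 = f 0)
    (hfg : ¬ GermEq (f 0) f g) {a b : ℝ} (ha : 0 ≤ a) (hb : 0 ≤ b) :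
    gromovProduct (f 0) (f a) (g b) = 0 := by
  set c := gromovProduct (f 0) (f a) (g b)
  refine le_antisymm (not_lt.1 fun hc => hfg ⟨c, hc, fun s hs => ?_⟩) (gromovProduct_nonneg ..)
  have hca : c ≤ a := hf.dist_zero_eq ha ▸ gromovProduct_le_dist_left ..
  have hcb : c ≤ b := by
    have hgb : dist (f 0) (g b) = b := hg0 ▸ hg.dist_zero_eq hb
    have := gromovProduct_le_dist_left (f 0) (g b) (f a)
    rw [gromovProduct_comm] at this
    linarith
  refine hX.eq_of_dist_le_gromovProduct (v := g b) (hf.dist_add_dist hs.1 (hs.2.trans hca)) ?_ ?_ ?_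
  · rw [← hg0]
    exact hg.dist_add_dist hs.1 (hs.2.trans hcb)
  · rw [hf.dist_zero_eq hs.1, ← hg0, hg.dist_zero_eq hs.1]
  · rw [hf.dist_zero_eq hs.1]
    exact hs.2

theorem IsBranchTime.symm {r r' : ℝ → X} {m : ℝ} (h : IsBranchTime r r' m) :
    IsBranchTime r' r m :=
  ⟨h.1, fun s hs => (h.2.1 s hs).symm, fun u hu v hv => by rw [dist_comm, h.2.2 v hv u hu]; ring⟩

theorem IsBranchTime.gromovProduct_eq_zero {r r' : ℝ → X} {m M u v : ℝ}
    (h : IsBranchTime r r' m) (hr : IsGeodesicRay r) (hmM : m ≤ M) (hu : M ≤ u) (hv : M ≤ v) :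
    gromovProduct (r M) (r u) (r' v) = 0 := by
  unfold gromovProduct
  rw [hr.dist_eq (h.1.trans hmM) hu, h.2.2 M hmM v (hmM.trans hv),
    h.2.2 u (hmM.trans hu) v (hmM.trans hv)]
  ring

/-- The branch time is the supremum of the times at which the two rays agree. -/
theorem ZeroHyperbolic.exists_isBranchTime (hX : ZeroHyperbolic X) {r r' : ℝ → X}
    (hr : IsGeodesicRay r) (hr' : IsGeodesicRay r') (h0 : r' 0 = r 0)
    (hrr' : ¬ Asymptotic r r') : ∃ m, IsBranchTime r r' m := by
  set A := {s | 0 ≤ s ∧ r s = r' s}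
  have h0A : (0 : ℝ) ∈ A := ⟨le_rfl, h0.symm⟩
  have hA : BddAbove A := by
    refine not_not.1 fun hA => hrr' ⟨0, fun t ht => ?_⟩
    obtain ⟨s, hs, hts⟩ := not_bddAbove_iff.1 hA t
    rw [hX.eqOn_of_eq hr hr' h0 hs.1 hs.2 t ⟨ht, hts.le⟩, dist_self]
  have hm0 : 0 ≤ sSup A := le_csSup hA h0A
  have hm : r (sSup A) = r' (sSup A) := eq_of_forall_dist_le fun ε hε => by
    obtain ⟨s, hs, hms⟩ := exists_lt_of_lt_csSup ⟨0, h0A⟩ (sub_lt_self (sSup A) (half_pos hε))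
    have hsm := le_csSup hA hs
    calc dist (r (sSup A)) (r' (sSup A))
        ≤ dist (r (sSup A)) (r s) + dist (r' s) (r' (sSup A)) := hs.2 ▸ dist_triangle _ _ _
      _ = 2 * (sSup A - s) := by rw [dist_comm, hr.dist_eq hs.1 hsm, hr'.dist_eq hs.1 hsm]; ring
      _ ≤ ε := by linarith
  refine ⟨sSup A, hm0, hX.eqOn_of_eq hr hr' h0 hm0 hm, fun u hu v hv => ?_⟩
  have hdiv : ¬ GermEq (r (sSup A)) (fun s => r (sSup A + s)) (fun s => r' (sSup A + s)) :=
    fun ⟨ε, hε, h⟩ => by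
      linarith [le_csSup hA ⟨by linarith, h ε ⟨hε.le, le_rfl⟩⟩]
  have h := hX.gromovProduct_eq_zero_of_not_germEq (hr.shift hm0) (hr'.shift hm0)
    (by simp [hm]) (by simpa using hdiv) (sub_nonneg.2 hu) (sub_nonneg.2 hv)
  simp only [add_zero, add_sub_cancel] at h
  unfold gromovProduct at h
  rw [hr.dist_eq hm0 hu, hm, hr'.dist_eq hm0 hv] at h
  linarith

theorem ZeroHyperbolic.eventually_gromovProduct_eq_zero (hX : ZeroHyperbolic X)
    {f g F G : ℝ → X} (hf : IsGeodesicRay f) (hg : IsGeodesicRay g) (hg0 : g 0 = f 0)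
    (hfg : ¬ GermEq (f 0) f g) (hF : Asymptotic f F) (hG : Asymptotic g G) :
    ∀ᶠ N in atTop, gromovProduct (f 0) (F N) (G N) = 0 := by
  obtain ⟨C, hC⟩ := hF
  obtain ⟨C', hC'⟩ := hG
  filter_upwards [eventually_gt_atTop (max (max C C') 0)] with N hN
  simp only [max_lt_iff] at hN
  have hfF := hf.sub_le_gromovProduct hN.2.le (hC N hN.2.le)
  have hgG := hg.sub_le_gromovProduct hN.2.le (hC' N hN.2.le)
  rw [hg0, gromovProduct_comm] at hgG
  have hfg0 := hX.gromovProduct_eq_zero_of_not_germEq hf hg hg0 hfg hN.2.le hN.2.le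
  refine le_antisymm (not_lt.1 fun hpos => ?_) (gromovProduct_nonneg ..)
  set δ := min (min (N - C) (N - C')) (gromovProduct (f 0) (F N) (G N))
  have hδ : 0 < δ := lt_min (lt_min (by linarith) (by linarith)) hpos
  have : δ ≤ gromovProduct (f 0) (f N) (g N) :=
    hX.le_gromovProduct_trans (hX.le_gromovProduct_trans
      ((min_le_left _ _).trans ((min_le_left _ _).trans hfF)) (min_le_right _ _))
      ((min_le_left _ _).trans ((min_le_right _ _).trans hgG))
  linarith

theorem ZeroHyperbolic.exists_pos_eventually_le_gromovProduct (hX : ZeroHyperbolic X)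
    {f g F G : ℝ → X} (hf : IsGeodesicRay f) (hg : IsGeodesicRay g)
    (hfg : GermEq (f 0) f g) (hF : Asymptotic f F) (hG : Asymptotic g G) :
    ∃ δ > 0, ∀ᶠ N in atTop, δ ≤ gromovProduct (f 0) (F N) (G N) := by
  obtain ⟨ε, hε, hfg⟩ := hfg
  obtain ⟨C, hC⟩ := hF
  obtain ⟨C', hC'⟩ := hG
  have hε' : f ε = g ε := hfg ε ⟨hε.le, le_rfl⟩
  have hg0 : g 0 = f 0 := (hfg 0 ⟨le_rfl, hε.le⟩).symm
  refine ⟨ε, hε, ?_⟩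
  filter_upwards [eventually_ge_atTop (ε + max (max C C') 0)] with N hN
  have := le_max_left (max C C') 0
  have := le_max_right (max C C') 0
  have hCN := le_max_left C C'
  have hCN' := le_max_right C C'
  have hfF := hf.sub_le_gromovProduct (by linarith) (hC N (by linarith))
  have hgG := hg.sub_le_gromovProduct (by linarith) (hC' N (by linarith))
  rw [hg0] at hgG
  have hfg : ε ≤ gromovProduct (f 0) (f N) (g N) := by
    have := (dist_triangle (f N) (f ε) (g N)).trans_eq
      (by rw [dist_comm, hf.dist_eq hε.le (by linarith), hε', hg.dist_eq hε.le (by linarith)])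
    unfold gromovProduct
    rw [hf.dist_zero_eq (by linarith), ← hg0, hg.dist_zero_eq (by linarith)]
    linarith
  refine hX.le_gromovProduct_trans (hX.le_gromovProduct_trans ?_ hfg) ?_
  · rw [gromovProduct_comm]
    linarith
  · linarith

theorem ZeroHyperbolic.eq_of_isGeodesicSegment_of_isGeodesicRay (hX : ZeroHyperbolic X)
    {r γ γ' : ℝ → X} {x : X} (hr : IsGeodesicRay r) {a b s : ℝ} (ha : 0 ≤ a) (hb : 0 ≤ b)
    (hγ : IsGeodesicSegment γ x (r a)) (hγ' : IsGeodesicSegment γ' x (r b)) (hs : 0 ≤ s)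
    (hsa : s + dist x (r 0) ≤ a) (hsb : s + dist x (r 0) ≤ b) : γ s = γ' s := by
  have hxa := dist_triangle (r 0) x (r a)
  have hxb := dist_triangle (r 0) x (r b)
  rw [hr.dist_zero_eq ha, dist_comm (r 0)] at hxa
  rw [hr.dist_zero_eq hb, dist_comm (r 0)] at hxb
  have hsa' : s ∈ Icc 0 (dist x (r a)) := ⟨hs, by linarith⟩
  have hsb' : s ∈ Icc 0 (dist x (r b)) := ⟨hs, by linarith⟩
  refine hX.eq_of_dist_le_gromovProduct (w := x) (u := r a) (v := r b) ?_ ?_ ?_ ?_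
  · rw [hγ.dist_left hsa', hγ.dist_right hsa']; ring
  · rw [hγ'.dist_left hsb', hγ'.dist_right hsb']; ring
  · rw [hγ.dist_left hsa', hγ'.dist_left hsb']
  · rw [hγ.dist_left hsa']
    unfold gromovProduct
    rw [hr a ha b hb]
    cases abs_cases (a - b) <;> linarith

/-- The ray from `x` is the limit of the geodesic segments from `x` to `r n`, which stabilize
on `[0, s]` as soon as `n ≥ s + d(x, r 0)`. -/
theorem ZeroHyperbolic.exists_isGeodesicRay_asymptotic (hX : ZeroHyperbolic X)
    (hgeo : IsGeodesicSpace X) (x : X) {r : ℝ → X} (hr : IsGeodesicRay r) :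
    ∃ ρ : ℝ → X, IsGeodesicRay ρ ∧ ρ 0 = x ∧ Asymptotic ρ r := by
  set d₀ := dist x (r 0)
  choose γ hγ using fun n : ℕ => hgeo x (r n)
  have hd : ∀ n : ℕ, (n : ℝ) - d₀ ≤ dist x (r n) ∧ dist x (r n) ≤ n + d₀ := fun n => by
    have h := hr.dist_zero_eq (Nat.cast_nonneg n)
    constructor <;> linarith [dist_triangle (r 0) x (r n), dist_triangle x (r 0) (r n),
      dist_comm x (r 0)]
  have hγ_eq : ∀ s ≥ 0, ∀ n : ℕ, s + d₀ ≤ n → γ ⌈s + d₀⌉₊ s = γ n s := fun s hs n hn =>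
    hX.eq_of_isGeodesicSegment_of_isGeodesicRay hr (Nat.cast_nonneg _) (Nat.cast_nonneg _)
      (hγ _) (hγ n) hs (Nat.le_ceil _) hn
  refine ⟨fun s => γ ⌈s + d₀⌉₊ s, fun s hs t ht => ?_, (hγ _).1, 3 * d₀ + 2, fun t ht => ?_⟩
  · have hn := Nat.le_ceil (max s t + d₀)
    have := le_max_left s t
    have := le_max_right s t
    have := (hd ⌈max s t + d₀⌉₊).1
    simp only
    rw [hγ_eq s hs _ (by linarith), hγ_eq t ht _ (by linarith)]
    exact (hγ _).2.2 s ⟨hs, by linarith⟩ t ⟨ht, by linarith⟩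
  · have hd₀ : 0 ≤ d₀ := dist_nonneg
    have hn := Nat.le_ceil (t + d₀)
    have hn' := Nat.ceil_lt_add_one (by positivity : 0 ≤ t + d₀)
    have hdn := hd ⌈t + d₀⌉₊
    have htn : t ∈ Icc 0 (dist x (r ⌈t + d₀⌉₊)) := ⟨ht, by linarith⟩
    calc dist (γ ⌈t + d₀⌉₊ t) (r t)
        ≤ dist (γ ⌈t + d₀⌉₊ t) (r ⌈t + d₀⌉₊) + dist (r ⌈t + d₀⌉₊) (r t) := dist_triangle _ _ _
      _ = (dist x (r ⌈t + d₀⌉₊) - t) + (⌈t + d₀⌉₊ - t) := by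
        rw [(hγ _).dist_right htn, dist_comm (r _) (r t), hr.dist_eq ht (by linarith)]
      _ ≤ 3 * d₀ + 2 := by linarith

end MetricTree

namespace SimplicialTreeSpace

theorem zeroHyperbolic (T : SimplicialTreeSpace) : ZeroHyperbolic T.space :=
  T.zero_hyperbolic

theorem isGeodesicSpace (T : SimplicialTreeSpace) : IsGeodesicSpace T.space :=
  T.geodesic

theorem atInfinity_surjective (T : SimplicialTreeSpace) : Function.Surjective T.atInfinity :=
  Quot.exists_rep

theorem atInfinity_eq_iff (T : SimplicialTreeSpace) {r r' : {r : ℝ → T.space // IsGeodesicRay r}} :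
    T.atInfinity r = T.atInfinity r' ↔ Asymptotic r.1 r'.1 :=
  Quot.eq.trans (Equivalence.eqvGen_iff ⟨fun r => Asymptotic.refl r.1, .symm, .trans⟩)

theorem exists_rayTo (T : SimplicialTreeSpace) (x : T.space) (a : T.Boundary) :
    ∃ ρ : {r : ℝ → T.space // IsGeodesicRay r}, ρ.1 0 = x ∧ T.atInfinity ρ = a := by
  obtain ⟨ρ, hρ, hρ0, hρa⟩ := T.zeroHyperbolic.exists_isGeodesicRay_asymptotic T.isGeodesicSpace x
    a.out.2
  exact ⟨⟨ρ, hρ⟩, hρ0, (T.atInfinity_eq_iff.2 hρa).trans a.out_eq⟩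

noncomputable def rayTo (T : SimplicialTreeSpace) (x : T.space) (a : T.Boundary) :
    {r : ℝ → T.space // IsGeodesicRay r} :=
  (T.exists_rayTo x a).choose

theorem rayTo_zero (T : SimplicialTreeSpace) (x : T.space) (a : T.Boundary) :
    (T.rayTo x a).1 0 = x :=
  (T.exists_rayTo x a).choose_spec.1

theorem atInfinity_rayTo (T : SimplicialTreeSpace) (x : T.space) (a : T.Boundary) :
    T.atInfinity (T.rayTo x a) = a :=
  (T.exists_rayTo x a).choose_spec.2

theorem isRayFrom_rayTo (T : SimplicialTreeSpace) (x : T.space) (a : T.Boundary) :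
    IsRayFrom x (T.rayTo x a).1 := by
  have := (T.rayTo x a).2.isRayFrom
  rwa [rayTo_zero] at this

theorem asymptotic_rayTo (T : SimplicialTreeSpace) (x : T.space) {a : T.Boundary}
    {ρ : {r : ℝ → T.space // IsGeodesicRay r}} (hρ : T.atInfinity ρ = a) :
    Asymptotic (T.rayTo x a).1 ρ.1 :=
  T.atInfinity_eq_iff.1 ((T.atInfinity_rayTo x a).trans hρ.symm)

def SameGermAt (T : SimplicialTreeSpace) (x : T.space) (a b : T.Boundary) : Prop :=
  GermEq x (T.rayTo x a).1 (T.rayTo x b).1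

def IsTripodCenter (T : SimplicialTreeSpace) (t : T.space) (a b c : T.Boundary) : Prop :=
  ¬ T.SameGermAt t a b ∧ ¬ T.SameGermAt t b c ∧ ¬ T.SameGermAt t a c

variable {T : SimplicialTreeSpace} {s t : T.space} {a b c : T.Boundary}

theorem SameGermAt.symm (h : T.SameGermAt s a b) : T.SameGermAt s b a :=
  GermEq.symm h

theorem SameGermAt.trans (h : T.SameGermAt s a b) (h' : T.SameGermAt s b c) :
    T.SameGermAt s a c :=
  GermEq.trans h h'

theorem IsTripodCenter.rotate (h : T.IsTripodCenter t a b c) : T.IsTripodCenter t b c a :=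
  ⟨h.2.1, fun e => h.2.2 e.symm, fun e => h.1 e.symm⟩

theorem IsTripodCenter.swap (h : T.IsTripodCenter t a b c) : T.IsTripodCenter t a c b :=
  ⟨h.2.2, fun e => h.2.1 e.symm, h.1⟩

theorem eventually_gromovProduct_eq_zero {ρa ρb : {r : ℝ → T.space // IsGeodesicRay r}}
    (ha : T.atInfinity ρa = a) (hb : T.atInfinity ρb = b) (h : ¬ T.SameGermAt s a b) :
    ∀ᶠ N in atTop, gromovProduct s (ρa.1 N) (ρb.1 N) = 0 := by
  have := T.zeroHyperbolic.eventually_gromovProduct_eq_zero (T.rayTo s a).2 (T.rayTo s b).2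
    (by rw [rayTo_zero, rayTo_zero]) (by rwa [rayTo_zero]) (T.asymptotic_rayTo s ha)
    (T.asymptotic_rayTo s hb)
  rwa [rayTo_zero] at this

theorem exists_pos_eventually_le_gromovProduct {ρa ρb : {r : ℝ → T.space // IsGeodesicRay r}}
    (ha : T.atInfinity ρa = a) (hb : T.atInfinity ρb = b) (h : T.SameGermAt s a b) :
    ∃ δ > 0, ∀ᶠ N in atTop, δ ≤ gromovProduct s (ρa.1 N) (ρb.1 N) := by
  have := T.zeroHyperbolic.exists_pos_eventually_le_gromovProduct (T.rayTo s a).2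
    (T.rayTo s b).2 (by rwa [rayTo_zero]) (T.asymptotic_rayTo s ha) (T.asymptotic_rayTo s hb)
  rwa [rayTo_zero] at this

theorem not_sameGermAt_of_eventually {ρa ρb : {r : ℝ → T.space // IsGeodesicRay r}}
    (ha : T.atInfinity ρa = a) (hb : T.atInfinity ρb = b)
    (h : ∀ᶠ N in atTop, gromovProduct s (ρa.1 N) (ρb.1 N) = 0) : ¬ T.SameGermAt s a b := by
  intro hab
  obtain ⟨δ, hδ, hδN⟩ := exists_pos_eventually_le_gromovProduct ha hb hab
  obtain ⟨N, hN, hδN⟩ := (h.and hδN).exists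
  linarith

theorem isTripodCenter_of_isBranchTime {p : T.space} {M m m' : ℝ}
    (hab : IsBranchTime (T.rayTo p a).1 (T.rayTo p b).1 M)
    (hac : IsBranchTime (T.rayTo p a).1 (T.rayTo p c).1 m)
    (hbc : IsBranchTime (T.rayTo p b).1 (T.rayTo p c).1 m') (hm : m ≤ M) (hm' : m' ≤ M) :
    T.IsTripodCenter ((T.rayTo p a).1 M) a b c := by
  have key : ∀ {x y : T.Boundary} {m : ℝ}, IsBranchTime (T.rayTo p x).1 (T.rayTo p y).1 m →
      m ≤ M → ¬ T.SameGermAt ((T.rayTo p x).1 M) x y := fun h hm =>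
    not_sameGermAt_of_eventually (T.atInfinity_rayTo p _) (T.atInfinity_rayTo p _) <|
      (eventually_ge_atTop M).mono fun _ hN => h.gromovProduct_eq_zero (T.rayTo p _).2 hm hN hN
  have hq : (T.rayTo p a).1 M = (T.rayTo p b).1 M := hab.2.1 M ⟨hab.1, le_rfl⟩
  exact ⟨key hab le_rfl, hq ▸ key hbc hm', key hac hm⟩

theorem exists_isTripodCenter (hab : a ≠ b) (hbc : b ≠ c) (hac : a ≠ c) :
    ∃ t, T.IsTripodCenter t a b c := by
  obtain ⟨ρ, -⟩ := T.atInfinity_surjective a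
  have branch : ∀ {x y : T.Boundary}, x ≠ y →
      ∃ m, IsBranchTime (T.rayTo (ρ.1 0) x).1 (T.rayTo (ρ.1 0) y).1 m := fun {x y} hxy =>
    T.zeroHyperbolic.exists_isBranchTime (T.rayTo _ _).2 (T.rayTo _ _).2
      (by rw [rayTo_zero, rayTo_zero]) fun h => hxy <| by
        rw [← T.atInfinity_rayTo (ρ.1 0) x, ← T.atInfinity_rayTo (ρ.1 0) y]
        exact T.atInfinity_eq_iff.2 h
  obtain ⟨M, hM⟩ := branch hab
  obtain ⟨m, hm⟩ := branch hac
  obtain ⟨m', hm'⟩ := branch hbc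
  rcases le_total m M with h | h <;> rcases le_total m' M with h' | h'
  · exact ⟨_, isTripodCenter_of_isBranchTime hM hm hm' h h'⟩
  · exact ⟨_, (isTripodCenter_of_isBranchTime hm' hM.symm hm.symm h' (h.trans h')).rotate.rotate⟩
  · exact ⟨_, (isTripodCenter_of_isBranchTime hm hM hm'.symm h (h'.trans h)).swap⟩
  · rcases le_total m m' with h'' | h''
    · exact ⟨_, (isTripodCenter_of_isBranchTime hm' hM.symm hm.symm
        (by linarith) h'').rotate.rotate⟩
    · exact ⟨_, (isTripodCenter_of_isBranchTime hm hM hm'.symm (by linarith) h'').swap⟩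

/-- Four points at infinity cannot be split as `{x, w} | {y, z}` at `t` and as
`{x, y} | {z, w}` at `t'`. -/
theorem not_sameGermAt_of_sameGermAt {t' : T.space} {x y z w : T.Boundary}
    (hxw : T.SameGermAt t x w) (hxy : ¬ T.SameGermAt t x y) (hxz : ¬ T.SameGermAt t x z)
    (hxz' : ¬ T.SameGermAt t' x z) (hxw' : ¬ T.SameGermAt t' x w) : ¬ T.SameGermAt t' x y := by
  intro hxy'
  have hzw : ¬ T.SameGermAt t z w := fun h => hxz (hxw.trans h.symm)
  have hyz' : ¬ T.SameGermAt t' y z := fun h => hxz' (hxy'.trans h)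
  have ray := fun u => T.atInfinity_rayTo t u
  obtain ⟨δ, hδ, h₁⟩ := exists_pos_eventually_le_gromovProduct (ray x) (ray w) hxw
  obtain ⟨δ', hδ', h₂⟩ := exists_pos_eventually_le_gromovProduct (ray x) (ray y) hxy'
  obtain ⟨N, h₁, h₂, h₃, h₄, h₅, h₆⟩ := (h₁.and <| h₂.and <|
    (eventually_gromovProduct_eq_zero (ray x) (ray y) hxy).and <|
    (eventually_gromovProduct_eq_zero (ray z) (ray w) hzw).and <|
    (eventually_gromovProduct_eq_zero (ray x) (ray w) hxw').and <|
    eventually_gromovProduct_eq_zero (ray y) (ray z) hyz').exists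
  have := gromovProduct_add_sub_add_eq t t' ((T.rayTo t x).1 N) ((T.rayTo t y).1 N)
    ((T.rayTo t z).1 N) ((T.rayTo t w).1 N)
  linarith [gromovProduct_nonneg t ((T.rayTo t y).1 N) ((T.rayTo t z).1 N),
    gromovProduct_nonneg t' ((T.rayTo t z).1 N) ((T.rayTo t w).1 N)]

end SimplicialTreeSpace

namespace IsInducedBoundaryOrder

variable {T : SimplicialTreeSpace}
  {ord : T.space → (ℝ → T.space) → (ℝ → T.space) → (ℝ → T.space) → ℤ}
  {o : T.Boundary → T.Boundary → T.Boundary → ℤ}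

theorem eq_ord_of_isTripodCenter (ho : IsInducedBoundaryOrder T ord o) {t : T.space}
    {a b c : T.Boundary} (h : T.IsTripodCenter t a b c) :
    o a b c = ord t (T.rayTo t a).1 (T.rayTo t b).1 (T.rayTo t c).1 := by
  have := ho.eq_ord t (T.rayTo t a) (T.rayTo t b) (T.rayTo t c) (T.rayTo_zero t a)
    (T.rayTo_zero t b) (T.rayTo_zero t c) h.1 h.2.1 h.2.2
  rwa [T.atInfinity_rayTo, T.atInfinity_rayTo, T.atInfinity_rayTo] at this

theorem eq_zero_iff (ho : IsInducedBoundaryOrder T ord o) (hord : IsCyclicOrientation T ord)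
    (x y z : T.Boundary) : o x y z = 0 ↔ ¬ (x ≠ y ∧ y ≠ z ∧ x ≠ z) := by
  refine ⟨fun h0 hne => ?_, fun h => ho.zero_of_not_distinct x y z (by tauto)⟩
  obtain ⟨t, ht⟩ := T.exists_isTripodCenter hne.1 hne.2.1 hne.2.2
  rw [ho.eq_ord_of_isTripodCenter ht, hord.zero_iff t _ _ _ (T.isRayFrom_rayTo t x)
    (T.isRayFrom_rayTo t y) (T.isRayFrom_rayTo t z)] at h0
  exact h0.elim ht.1 (·.elim ht.2.1 ht.2.2)

theorem eq_neg_one_or_eq_zero_or_eq_one (ho : IsInducedBoundaryOrder T ord o)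
    (hord : IsCyclicOrientation T ord) (x y z : T.Boundary) :
    o x y z = -1 ∨ o x y z = 0 ∨ o x y z = 1 := by
  by_cases h : x ≠ y ∧ y ≠ z ∧ x ≠ z
  · obtain ⟨t, ht⟩ := T.exists_isTripodCenter h.1 h.2.1 h.2.2
    rw [ho.eq_ord_of_isTripodCenter ht]
    exact hord.range t _ _ _
  · exact Or.inr (Or.inl ((ho.eq_zero_iff hord x y z).2 h))

theorem cyclic (ho : IsInducedBoundaryOrder T ord o) (hord : IsCyclicOrientation T ord)
    (x y z : T.Boundary) : o x y z = o y z x ∧ o x y z = - o x z y := by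
  by_cases h : x ≠ y ∧ y ≠ z ∧ x ≠ z
  · obtain ⟨t, ht⟩ := T.exists_isTripodCenter h.1 h.2.1 h.2.2
    rw [ho.eq_ord_of_isTripodCenter ht, ho.eq_ord_of_isTripodCenter ht.rotate,
      ho.eq_ord_of_isTripodCenter ht.swap]
    exact hord.cyclic t _ _ _
  · rw [ho.zero_of_not_distinct x y z (by tauto), ho.zero_of_not_distinct y z x (by tauto),
      ho.zero_of_not_distinct x z y (by tauto)]
    simp

theorem eq_one_trans_of_not_sameGermAt (ho : IsInducedBoundaryOrder T ord o)
    (hord : IsCyclicOrientation T ord) {s : T.space} {x y z w : T.Boundary}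
    (hxy : ¬ T.SameGermAt s x y) (hxz : ¬ T.SameGermAt s x z) (hxw : ¬ T.SameGermAt s x w)
    (hyzw : ¬ (T.SameGermAt s y z ∧ T.SameGermAt s z w)) (h₁ : o x y z = 1)
    (h₂ : o x z w = 1) : o x y w = 1 := by
  have hxx := GermEq.refl s (T.rayTo s x).1
  by_cases hyz : T.SameGermAt s y z
  · have hzw : ¬ T.SameGermAt s z w := fun h => hyzw ⟨hyz, h⟩
    rw [ho.eq_ord_of_isTripodCenter ⟨hxy, fun h => hzw (hyz.symm.trans h), hxw⟩, ← h₂,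
      ho.eq_ord_of_isTripodCenter ⟨hxz, hzw, hxw⟩]
    exact hord.germ_invariant s _ _ _ _ _ _ hxx hyz (GermEq.refl _ _)
  by_cases hzw : T.SameGermAt s z w
  · rw [ho.eq_ord_of_isTripodCenter ⟨hxy, fun h => hyz (h.trans hzw.symm), hxw⟩, ← h₁,
      ho.eq_ord_of_isTripodCenter ⟨hxy, hyz, hxz⟩]
    exact hord.germ_invariant s _ _ _ _ _ _ hxx (GermEq.refl _ _) hzw.symm
  by_cases hyw : T.SameGermAt s y w
  · have h₃ : o x z w = o x z y := by
      rw [ho.eq_ord_of_isTripodCenter ⟨hxz, hzw, hxw⟩,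
        ho.eq_ord_of_isTripodCenter ⟨hxz, fun h => hyz h.symm, hxy⟩]
      exact hord.germ_invariant s _ _ _ _ _ _ hxx (GermEq.refl _ _) hyw.symm
    linarith [(ho.cyclic hord x y z).2]
  rw [ho.eq_ord_of_isTripodCenter ⟨hxy, hyw, hxw⟩]
  rw [ho.eq_ord_of_isTripodCenter ⟨hxy, hyz, hxz⟩] at h₁
  rw [ho.eq_ord_of_isTripodCenter ⟨hxz, hzw, hxw⟩] at h₂
  exact hord.trans s _ _ _ _ (T.isRayFrom_rayTo s x) (T.isRayFrom_rayTo s y)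
    (T.isRayFrom_rayTo s z) (T.isRayFrom_rayTo s w) hxy hxz hxw hyz hyw hzw h₁ h₂

/-- At the center `t` of `x, y, z`, the point `w` is separated from `x`, unless it leaves `t`
together with `x`; then `x` is separated from `y` at the center of `x, z, w`. -/
theorem eq_one_trans (ho : IsInducedBoundaryOrder T ord o) (hord : IsCyclicOrientation T ord)
    {x y z w : T.Boundary} (hxy : x ≠ y) (hxz : x ≠ z) (hxw : x ≠ w) (hyz : y ≠ z)
    (hzw : z ≠ w) (h₁ : o x y z = 1) (h₂ : o x z w = 1) : o x y w = 1 := by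
  obtain ⟨t, ht⟩ := T.exists_isTripodCenter hxy hyz hxz
  by_cases hxw_t : T.SameGermAt t x w
  · obtain ⟨t', ht'⟩ := T.exists_isTripodCenter hxz hzw hxw
    have hxy' := T.not_sameGermAt_of_sameGermAt hxw_t ht.1 ht.2.2 ht'.1 ht'.2.2
    exact ho.eq_one_trans_of_not_sameGermAt hord hxy' ht'.1 ht'.2.2 (ht'.2.1 ·.2) h₁ h₂
  · exact ho.eq_one_trans_of_not_sameGermAt hord ht.1 ht.2.2 hxw_t (ht.2.1 ·.1) h₁ h₂

end IsInducedBoundaryOrder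

/-- let `T` be a simplicial tree all of whose vertices have finite
valence `≥ 3`, equipped with a cyclic orientation (a cyclic order `or_x` on the germs
of rays at each point).  Then the induced order `o` on the boundary at infinity
`∂∞T` — defined via the centers of tripods — is a total cyclic order on `∂∞T`. -/
theorem induced_boundary_order_isTotalCyclicOrder
    (T : SimplicialTreeSpace)
    (ord : T.space → (ℝ → T.space) → (ℝ → T.space) → (ℝ → T.space) → ℤ)
    (hord : IsCyclicOrientation T ord)
    (o : T.Boundary → T.Boundary → T.Boundary → ℤ)
    (ho : IsInducedBoundaryOrder T ord o) :
    IsTotalCyclicOrder o :=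
  ⟨ho.eq_neg_one_or_eq_zero_or_eq_one hord, ho.eq_zero_iff hord, ho.cyclic hord,
    fun _ _ _ _ hxy hxz hxw hyz _ hzw => ho.eq_one_trans hord hxy hxz hxw hyz hzw⟩
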